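/- arXiv:1412.2719 — 6 statements merged into one kernel-verified Lean document; each statement's English description precedes it below -/
import Mathlib

section
/- Let n, k be natural numbers with k ≥ 1 and let f_1, …, f_k : ℝ → ℝ^n be smooth (C^∞) functions. Define functions π^1, …, π^k : ℝ → ℝ^n by π^1 := (1/k) f_k and π^{U+1} := (1/(k−U)) (f_{k−U} − (π^U)') for U = 1, …, k−1. Then for every U ∈ {0, …, k−1} and every t ∈ ℝ, π^{U+1}(t) = ∑_{j=0}^{U} (−1)^j ((k−U−1)!/(k−U+j)!) · f_{k−U+j}^{(j)}(t), where f^{(j)} denotes the j-th iterated derivative. -/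
/-- **Closed form of the weighted Jacobi–Ostrogradski momenta.**
Given smooth `f 1, …, f k : ℝ → ℝⁿ` and weighted momenta defined by
`π 1 = (1/k) • f k` and `π (U+1) = (1/(k-U)) • (f (k-U) - (π U)')` for
`U = 1, …, k-1`, one has for every `0 ≤ U ≤ k-1` and `t`:
`π (U+1) t = ∑_{j=0}^{U} (-1)^j ((k-U-1)!/(k-U+j)!) (f (k-U+j))^{(j)}(t)`. -/
theorem weighted_jacobi_ostrogradski_closed_form
    (n k : ℕ) (hk : 1 ≤ k)
    (f : ℕ → ℝ → Fin n → ℝ)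
    (hf : ∀ i, 1 ≤ i → i ≤ k → ContDiff ℝ (⊤ : ℕ∞) (f i))
    (π : ℕ → ℝ → Fin n → ℝ)
    (hπ1 : ∀ t, π 1 t = ((k : ℝ))⁻¹ • f k t)
    (hrec : ∀ U, 1 ≤ U → U ≤ k - 1 → ∀ t,
      π (U + 1) t = ((k : ℝ) - (U : ℝ))⁻¹ • (f (k - U) t - deriv (π U) t)) :
    ∀ U < k, ∀ t : ℝ,
      π (U + 1) t = ∑ j ∈ Finset.range (U + 1),
        (((-1 : ℝ)) ^ j * (((k - U - 1).factorial : ℝ) / ((k - U + j).factorial : ℝ)))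
          • iteratedDeriv j (f (k - U + j)) t := by
  intro U
  induction U with
  | zero =>
    intro _ t
    obtain ⟨k', rfl⟩ : ∃ k', k = k' + 1 := ⟨k - 1, by omega⟩
    simp only [zero_add, Finset.sum_range_one, pow_zero, one_mul, Nat.sub_zero, Nat.add_zero,
      Nat.add_sub_cancel, iteratedDeriv_zero, hπ1]
    congr 1
    rw [Nat.factorial_succ]
    have h0 : ((k'.factorial : ℝ)) ≠ 0 := Nat.cast_ne_zero.mpr k'.factorial_ne_zero
    push_cast
    field_simp
  | succ U ih =>
    intro hU t
    have hU' : U < k := by omega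
    obtain ⟨m, rfl⟩ : ∃ m, k = U + 2 + m := ⟨k - U - 2, by omega⟩
    rw [hrec (U + 1) (by omega) (by omega) t]
    have hπeq : π (U + 1) = fun s => ∑ j ∈ Finset.range (U + 1),
        ((-1 : ℝ) ^ j * (((m + 1).factorial : ℝ) / ((m + 2 + j).factorial : ℝ)))
          • iteratedDeriv j (f (m + 2 + j)) s := by
      funext s
      rw [ih hU' s]
      refine Finset.sum_congr rfl fun j hj => ?_
      have e1 : U + 2 + m - U - 1 = m + 1 := by omega
      have e2 : U + 2 + m - U + j = m + 2 + j := by omega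
      rw [e1, e2]
    have hdiffj : ∀ j, j ≤ U → DifferentiableAt ℝ (iteratedDeriv j (f (m + 2 + j))) t := by
      intro j hj
      exact ((hf (m + 2 + j) (by omega) (by omega)).differentiable_iteratedDeriv j
        (by exact_mod_cast lt_top_iff_ne_top.mpr (by simp))).differentiableAt
    have hderiv : deriv (π (U + 1)) t = ∑ j ∈ Finset.range (U + 1),
        ((-1 : ℝ) ^ j * (((m + 1).factorial : ℝ) / ((m + 2 + j).factorial : ℝ)))
          • iteratedDeriv (j + 1) (f (m + 2 + j)) t := by
      rw [hπeq]
      rw [deriv_fun_sum (A := fun j s =>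
          ((-1 : ℝ) ^ j * (((m + 1).factorial : ℝ) / ((m + 2 + j).factorial : ℝ)))
            • iteratedDeriv j (f (m + 2 + j)) s)
        (fun j hj =>
          (hdiffj j (Nat.lt_succ_iff.mp (Finset.mem_range.mp hj))).const_smul
            ((-1 : ℝ) ^ j * (((m + 1).factorial : ℝ) / ((m + 2 + j).factorial : ℝ))))]
      refine Finset.sum_congr rfl fun j hj => ?_
      rw [deriv_fun_const_smul _ (hdiffj j (Nat.lt_succ_iff.mp (Finset.mem_range.mp hj))),
        ← iteratedDeriv_succ]
    rw [hderiv]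
    have e3 : U + 2 + m - (U + 1) = m + 1 := by omega
    rw [e3]
    have ha : ((U + 2 + m : ℕ) : ℝ) - ((U + 1 : ℕ) : ℝ) = (m : ℝ) + 1 := by push_cast; ring
    rw [ha]
    conv_rhs => rw [Finset.sum_range_succ']
    simp only [show ∀ j, m + 1 + (j + 1) = m + 2 + j from fun j => by omega,
      Nat.add_zero, Nat.add_sub_cancel, pow_zero, one_mul, iteratedDeriv_zero]
    rw [smul_sub, Finset.smul_sum, sub_eq_add_neg, ← Finset.sum_neg_distrib, add_comm]
    have hm1 : ((m : ℝ) + 1) ≠ 0 := by positivity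
    congr 1
    · refine Finset.sum_congr rfl fun j hj => ?_
      rw [smul_smul, ← neg_smul]
      congr 1
      have h0 : (((m + 2 + j).factorial : ℝ)) ≠ 0 := Nat.cast_ne_zero.mpr (by positivity)
      rw [Nat.factorial_succ m]
      push_cast
      field_simp
      ring
    · congr 1
      rw [Nat.factorial_succ m]
      have h0 : ((m.factorial : ℝ)) ≠ 0 := Nat.cast_ne_zero.mpr m.factorial_ne_zero
      push_cast
      field_simp
end

section
/- Let n, k be natural numbers with k ≥ 1 and let f_1, …, f_k : ℝ → ℝ^n be smooth (C^∞) functions. Define π^1, …, π^k : ℝ → ℝ^n by π^1 := (1/k) f_k and π^{U+1} := (1/(k−U)) (f_{k−U} − (π^U)') for U = 1, …, k−1. Then for every t ∈ ℝ, π^k(t) = ∑_{i=1}^{k} (−1)^{i−1} (1/i!) f_i^{(i−1)}(t), where f^{(m)} denotes the m-th iterated derivative. -/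
private lemma fact_mul_aux (m : ℕ) (hm : 1 ≤ m) :
    (m.factorial : ℝ) = (m : ℝ) * ((m - 1).factorial : ℝ) := by
  have h : m - 1 + 1 = m := by omega
  calc (m.factorial : ℝ) = (((m - 1 + 1).factorial : ℕ) : ℝ) := by rw [h]
    _ = (m : ℝ) * ((m - 1).factorial : ℝ) := by
        rw [Nat.factorial_succ]; push_cast [h]; ring

/-- **Top weighted Jacobi–Ostrogradski momentum.**
Given smooth `f 1, …, f k : ℝ → ℝⁿ` and weighted momenta defined by
`π 1 = (1/k) • f k` and `π (U+1) = (1/(k-U)) • (f (k-U) - (π U)')` for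
`U = 1, …, k-1`, the top momentum satisfies
`π k t = ∑_{i=1}^{k} (-1)^(i-1) (1/i!) (f i)^{(i-1)}(t)`. -/
theorem top_weighted_jacobi_ostrogradski_momentum
    (n k : ℕ) (hk : 1 ≤ k)
    (f : ℕ → ℝ → Fin n → ℝ)
    (hf : ∀ i, 1 ≤ i → i ≤ k → ContDiff ℝ (⊤ : ℕ∞) (f i))
    (π : ℕ → ℝ → Fin n → ℝ)
    (hπ1 : ∀ t, π 1 t = ((k : ℝ))⁻¹ • f k t)
    (hrec : ∀ U, 1 ≤ U → U ≤ k - 1 → ∀ t,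
      π (U + 1) t = ((k : ℝ) - (U : ℝ))⁻¹ • (f (k - U) t - deriv (π U) t)) :
    ∀ t : ℝ,
      π k t = ∑ i ∈ Finset.Icc 1 k,
        (((-1 : ℝ)) ^ (i - 1) * ((i.factorial : ℝ))⁻¹)
          • iteratedDeriv (i - 1) (f i) t := by
  have hdiff : ∀ i j : ℕ, 1 ≤ i → i ≤ k → Differentiable ℝ (iteratedDeriv j (f i)) := by
    intro i j h1 h2
    exact (hf i h1 h2).differentiable_iteratedDeriv j (by exact_mod_cast ENat.coe_lt_top j)
  have key : ∀ U, 1 ≤ U → U ≤ k → ∀ t : ℝ, π U t =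
      ∑ j ∈ Finset.range U,
        (((-1 : ℝ)) ^ j * (((k - U).factorial : ℝ)) / (((k - U + 1 + j).factorial : ℝ)))
          • iteratedDeriv j (f (k - U + 1 + j)) t := by
    intro U
    induction U with
    | zero => omega
    | succ U ih =>
      intro _ hUk t
      rcases Nat.eq_zero_or_pos U with h0 | hU1
      · subst h0
        have e1 : k - 1 + 1 = k := by omega
        simp only [zero_add, Finset.sum_range_one, add_zero, pow_zero, one_mul, e1,
          iteratedDeriv_zero, hπ1 t]
        congr 1
        have hfm := fact_mul_aux k hk
        have hf0 : ((k - 1).factorial : ℝ) ≠ 0 := by positivity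
        rw [hfm, mul_comm, ← div_div, div_self hf0, one_div]
      · have hUk' : U ≤ k := by omega
        rw [hrec U hU1 (by omega) t]
        have hπU : π U = fun s => ∑ j ∈ Finset.range U,
            (((-1 : ℝ)) ^ j * (((k - U).factorial : ℝ)) / (((k - U + 1 + j).factorial : ℝ)))
              • iteratedDeriv j (f (k - U + 1 + j)) s :=
          funext fun s => ih hU1 hUk' s
        have hder : deriv (π U) t = ∑ j ∈ Finset.range U,
            (((-1 : ℝ)) ^ j * (((k - U).factorial : ℝ)) / (((k - U + 1 + j).factorial : ℝ)))
              • iteratedDeriv (j + 1) (f (k - U + 1 + j)) t := by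
          rw [hπU, deriv_fun_sum]
          · refine Finset.sum_congr rfl fun j hj => ?_
            have hd : DifferentiableAt ℝ (iteratedDeriv j (f (k - U + 1 + j))) t :=
              (hdiff (k - U + 1 + j) j (by omega) (by
                have := Finset.mem_range.mp hj; omega)).differentiableAt
            rw [deriv_fun_const_smul _ hd, iteratedDeriv_succ]
          · intro j hj
            have hd : DifferentiableAt ℝ (iteratedDeriv j (f (k - U + 1 + j))) t :=
              (hdiff (k - U + 1 + j) j (by omega) (by
                have := Finset.mem_range.mp hj; omega)).differentiableAt
            exact hd.fun_const_smul _
        rw [hder]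
        set m : ℕ := k - U with hm
        have hm1 : 1 ≤ m := by omega
        have hcast : ((k : ℝ) - (U : ℝ)) = (m : ℝ) := by
          rw [hm, Nat.cast_sub hUk']
        have e3 : k - (U + 1) = m - 1 := by omega
        have e4 : ∀ j : ℕ, m + 1 + j = m + (j + 1) := by omega
        have e5 : m - 1 + 1 = m := by omega
        rw [hcast, Finset.sum_range_succ']
        simp only [e3, e5, e4, add_zero, pow_zero, one_mul, iteratedDeriv_zero]
        rw [smul_sub, Finset.smul_sum]
        have hm0 : (m : ℝ) ≠ 0 := by positivity
        have hfm : (m.factorial : ℝ) = (m : ℝ) * ((m - 1).factorial : ℝ) := fact_mul_aux m hm1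
        have hA : (m : ℝ)⁻¹ • f m t
            = (((m - 1).factorial : ℝ) / ((m).factorial : ℝ)) • f m t := by
          congr 1
          have hf0 : (((m - 1).factorial : ℝ)) ≠ 0 := by positivity
          rw [hfm, mul_comm, ← div_div, div_self hf0, one_div]
        rw [hA, sub_eq_add_neg, add_comm]
        congr 1
        rw [← Finset.sum_neg_distrib]
        refine Finset.sum_congr rfl fun j hj => ?_
        rw [smul_smul, ← neg_smul]
        congr 1
        have hf0 : (((m + (j + 1)).factorial : ℝ)) ≠ 0 := by positivity
        rw [hfm]
        field_simp
        ring
  intro t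
  rw [key k hk le_rfl t,
    show Finset.Icc 1 k = Finset.Ico 1 (k + 1) from by rw [Finset.Ico_add_one_right_eq_Icc],
    Finset.sum_Ico_eq_sum_range]
  simp only [Nat.add_sub_cancel, Nat.sub_self, Nat.zero_add, Nat.factorial_zero,
    Nat.cast_one, Nat.add_sub_cancel_left, div_eq_mul_inv, one_mul, mul_one]
end

section
/- Let m, n, k be natural numbers with k ≥ 1. Let ρ : ℝ^m → (Fin m → Fin n → ℝ) and C : ℝ^m → (Fin n → Fin n → Fin n → ℝ) be smooth (components ρ^A_a(x) and C^c_{ba}(x)), and let L : ℝ^m × (Fin k → ℝ^n) → ℝ be smooth, with arguments written L(x, η_1, …, η_k). Let x : ℝ → ℝ^m and η_1, …, η_k : ℝ → ℝ^n be smooth curves, write γ(t) = (x(t), η_1(t), …, η_k(t)), and suppose there are smooth momenta π^1, …, π^k : ℝ → ℝ^n satisfying for all t and all a ∈ Fin n: (a) k·π^1_a(t) = (∂L/∂η_k^a)(γ(t)); (b) for each U ∈ {1, …, k−1}, (π^U_a)'(t) = (∂L/∂η_{k−U}^a)(γ(t)) − (k−U)·π^{U+1}_a(t); (c) (π^k_a)'(t)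 = ∑_A ρ^A_a(x(t))·(∂L/∂x^A)(γ(t)) + ∑_{b,c} η_1^b(t)·C^c_{ba}(x(t))·π^k_c(t). Then the k-th order Euler–Lagrange equations hold: for all a ∈ Fin n and t ∈ ℝ, ∑_A ρ^A_a(x(t))·(∂L/∂x^A)(γ(t)) − (d/dt)Π_a(t) + ∑_{b,c} η_1^b(t)·C^c_{ba}(x(t))·Π_c(t) = 0, where Π_c(t) := ∑_{i=1}^{k} (−1)^{i−1} (1/i!) · (d/dt)^{i−1}[ s ↦ (∂L/∂η_i^c)(γ(s)) ](t). -/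
open scoped ContDiff

private lemma contDiff_iteratedDeriv_inf {f : ℝ → ℝ} (hf : ContDiff ℝ ∞ f) (j : ℕ) :
    ContDiff ℝ ∞ (iteratedDeriv j f) := by
  induction j with
  | zero => simpa [iteratedDeriv_zero] using hf
  | succ j ih => rw [iteratedDeriv_succ]; exact (contDiff_infty_iff_deriv.mp ih).2

/-- Partial derivative of a Lagrangian `L(x, η)` with respect to the base
coordinate `x^A`. -/
noncomputable def pdBase {m n k : ℕ}
    (L : (Fin m → ℝ) × (Fin k → Fin n → ℝ) → ℝ)
    (A : Fin m) (p : (Fin m → ℝ) × (Fin k → Fin n → ℝ)) : ℝ :=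
  fderiv ℝ L p (Pi.single A 1, 0)

/-- Partial derivative of a Lagrangian `L(x, η)` with respect to the fibre
coordinate `η_w^a` (here `w : Fin k` corresponds to the weight `w + 1`). -/
noncomputable def pdVel {m n k : ℕ}
    (L : (Fin m → ℝ) × (Fin k → Fin n → ℝ) → ℝ)
    (w : Fin k) (a : Fin n) (p : (Fin m → ℝ) × (Fin k → Fin n → ℝ)) : ℝ :=
  fderiv ℝ L p (0, Pi.single w (Pi.single a 1))

/-- **The k-th order Euler–Lagrange equations on a Lie algebroid.**
Given structure functions `ρ^A_a = ρ x A a`, `C^c_{ba} = C x c b a`, a k-th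
order Lagrangian `L(x, η_1, …, η_k)` (the curve `η i` of index `i : Fin k`
represents the weight-`i+1` velocity), and momenta `π^1, …, π^k` satisfying the
phase-dynamics equations (a), (b), (c), the k-th order Euler–Lagrange
equations hold, where
`Π_c(t) = ∑_{i=1}^{k} (-1)^{i-1} (1/i!) (d/dt)^{i-1} (∂L/∂η_i^c ∘ γ)(t)`. -/
theorem higher_euler_lagrange_on_algebroid
    (m n k : ℕ) (hk : 1 ≤ k)
    (ρ : (Fin m → ℝ) → Fin m → Fin n → ℝ) (hρ : ContDiff ℝ (⊤ : ℕ∞) ρ)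
    (C : (Fin m → ℝ) → Fin n → Fin n → Fin n → ℝ) (hC : ContDiff ℝ (⊤ : ℕ∞) C)
    (L : (Fin m → ℝ) × (Fin k → Fin n → ℝ) → ℝ) (hL : ContDiff ℝ (⊤ : ℕ∞) L)
    (x : ℝ → Fin m → ℝ) (hx : ContDiff ℝ (⊤ : ℕ∞) x)
    (η : Fin k → ℝ → Fin n → ℝ) (hη : ∀ i, ContDiff ℝ (⊤ : ℕ∞) (η i))
    (γ : ℝ → (Fin m → ℝ) × (Fin k → Fin n → ℝ))
    (hγ : ∀ t, γ t = (x t, fun i => η i t))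
    (π : ℕ → Fin n → ℝ → ℝ)
    (hπ : ∀ U a, 1 ≤ U → U ≤ k → ContDiff ℝ (⊤ : ℕ∞) (π U a))
    -- (a)  k·π¹_a = ∂L/∂η_k^a ∘ γ
    (ha : ∀ t, ∀ a : Fin n,
      (k : ℝ) * π 1 a t = pdVel L ⟨k - 1, by omega⟩ a (γ t))
    -- (b)  (π^U_a)' = ∂L/∂η_{k-U}^a ∘ γ − (k−U)·π^{U+1}_a
    (hb : ∀ U, 1 ≤ U → U ≤ k - 1 → ∀ t, ∀ a : Fin n,
      deriv (π U a) t =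
        pdVel L ⟨k - U - 1, by omega⟩ a (γ t) - ((k : ℝ) - (U : ℝ)) * π (U + 1) a t)
    -- (c)  (π^k_a)' = ∑_A ρ^A_a ∂L/∂x^A ∘ γ + ∑_{b,c} η_1^b C^c_{ba} π^k_c
    (hc : ∀ t, ∀ a : Fin n,
      deriv (π k a) t =
        (∑ A : Fin m, ρ (x t) A a * pdBase L A (γ t)) +
        ∑ b : Fin n, ∑ c : Fin n,
          η ⟨0, by omega⟩ t b * C (x t) c b a * π k c t) :
    -- conclusion: the k-th order Euler–Lagrange equations
    ∀ Pmom : Fin n → ℝ → ℝ,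
      (∀ c t, Pmom c t = ∑ i : Fin k,
        ((-1 : ℝ)) ^ (i : ℕ) * (((i : ℕ) + 1).factorial : ℝ)⁻¹ *
          iteratedDeriv (i : ℕ) (fun s => pdVel L i c (γ s)) t) →
      ∀ a : Fin n, ∀ t : ℝ,
        (∑ A : Fin m, ρ (x t) A a * pdBase L A (γ t)) - deriv (Pmom a) t +
          ∑ b : Fin n, ∑ c : Fin n,
            η ⟨0, by omega⟩ t b * C (x t) c b a * Pmom c t = 0 := by
  intro Pmom hPdef a t
  have hone : (1 : WithTop ℕ∞) ≤ ((⊤ : ℕ∞) : WithTop ℕ∞) := by exact_mod_cast le_top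
  -- smoothness of the curve γ
  have hγs : ContDiff ℝ ∞ γ := by
    have : γ = fun t => (x t, fun i => η i t) := funext hγ
    rw [this]
    exact (ContDiff.prodMk (hx.of_le (by simp)) (contDiff_pi.mpr fun i => (hη i).of_le (by simp)))
  -- the velocity partial derivatives along γ, as ℕ-indexed functions
  set G : ℕ → Fin n → ℝ → ℝ :=
    fun w c => if h : w < k then (fun s => pdVel L ⟨w, h⟩ c (γ s)) else 0 with hGdef
  have hGs : ∀ w c, ContDiff ℝ ∞ (G w c) := by
    intro w c
    rw [hGdef]
    by_cases h : w < k
    · simp only [dif_pos h]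
      have h1 : ContDiff ℝ ∞ (fun p => pdVel L ⟨w, h⟩ c p) := by
        unfold pdVel
        exact ((hL.of_le (m := ∞) le_rfl).fderiv_right (m := ∞) (by simp)).clm_apply contDiff_const
      exact h1.comp hγs
    · simp only [dif_neg h]
      exact contDiff_const
  have hGvel : ∀ (i : Fin k) (c : Fin n), (fun s => pdVel L i c (γ s)) = G (↑i) c := by
    intro i c
    rw [hGdef]
    simp only [dif_pos i.isLt, Fin.eta]
  -- coefficients and the closed-form formula for the momenta
  set coef : ℕ → ℕ → ℝ :=
    fun U j => (-1 : ℝ) ^ j * ((k - U).factorial : ℝ) * (((k - U + j + 1).factorial : ℝ))⁻¹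
    with hcoef
  set S : ℕ → Fin n → ℝ → ℝ :=
    fun U c t => ∑ j ∈ Finset.range U, coef U j * iteratedDeriv j (G (k - U + j) c) t
    with hSdef
  -- derivative of S
  have hSderiv : ∀ U c t, deriv (S U c) t =
      ∑ j ∈ Finset.range U, coef U j * iteratedDeriv (j + 1) (G (k - U + j) c) t := by
    intro U c t
    have hdiff : ∀ j ∈ Finset.range U,
        DifferentiableAt ℝ (fun s => iteratedDeriv j (G (k - U + j) c) s) t :=
      fun j _ => ((contDiff_iteratedDeriv_inf (hGs _ c) j).differentiable (by simp)).differentiableAt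
    have hds : deriv (fun s => ∑ j ∈ Finset.range U,
        coef U j * iteratedDeriv j (G (k - U + j) c) s) t =
        ∑ j ∈ Finset.range U,
          deriv (fun s => coef U j * iteratedDeriv j (G (k - U + j) c) s) t := by
      apply deriv_fun_sum
      intro j hj
      exact (hdiff j hj).const_mul _
    rw [hSdef]
    rw [hds]
    refine Finset.sum_congr rfl fun j hj => ?_
    rw [deriv_const_mul _ (hdiff j hj), ← iteratedDeriv_succ]
  -- the key closed-form solution of the recursion for the momenta
  have key : ∀ U, 1 ≤ U → U ≤ k → ∀ c t, π U c t = S U c t := by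
    intro U
    induction U with
    | zero => omega
    | succ U ih =>
      intro _ h2 c t
      rcases Nat.eq_zero_or_pos U with hU0 | hU1
      · -- base case U + 1 = 1
        subst hU0
        have hk0 : (k : ℝ) ≠ 0 := Nat.cast_ne_zero.mpr (by omega)
        apply mul_left_cancel₀ hk0
        have hS1 : S 1 c t = coef 1 0 * G (k - 1) c t := by
          rw [hSdef]
          simp [iteratedDeriv_zero]
        rw [hS1, ha t c]
        have hG1 : G (k - 1) c t = pdVel L ⟨k - 1, by omega⟩ c (γ t) := by
          rw [hGdef]; simp only [dif_pos (show k - 1 < k by omega)]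
        rw [hG1, hcoef]
        have hfacn : k * (k - 1).factorial = k.factorial := Nat.mul_factorial_pred (by omega)
        have hfac : (k.factorial : ℝ) = (k : ℝ) * ((k - 1).factorial : ℝ) := by
          rw [← hfacn]; push_cast; ring
        have hfk : (k.factorial : ℝ) ≠ 0 := Nat.cast_ne_zero.mpr k.factorial_ne_zero
        simp only [pow_zero, one_mul, Nat.sub_self, Nat.zero_add, zero_add]
        rw [show k - 1 + 0 + 1 = k from by omega]
        field_simp [hfac]
        rw [hfac]
        ring
      · -- inductive step: 1 ≤ U, U + 1 ≤ k
        have hUk : U ≤ k - 1 := by omega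
        have hπfun : π U c = S U c := funext (ih hU1 (by omega) c)
        have hbU := hb U hU1 hUk t c
        have hr0 : ((k : ℝ) - (U : ℝ)) ≠ 0 := by
          have : (U : ℝ) < (k : ℝ) := by exact_mod_cast (show U < k by omega)
          linarith
        apply mul_left_cancel₀ hr0
        have hπnext : ((k : ℝ) - (U : ℝ)) * π (U + 1) c t =
            pdVel L ⟨k - U - 1, by omega⟩ c (γ t) - deriv (π U c) t := by
          rw [hbU]; ring
        rw [hπnext, hπfun, hSderiv U c t]
        -- now compute (k - U) * S (U+1) c t
        have hGU : pdVel L ⟨k - U - 1, by omega⟩ c (γ t) = G (k - U - 1) c t := by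
          rw [hGdef]; simp only [dif_pos (show k - U - 1 < k by omega)]
        rw [hGU]
        have hsplit : S (U + 1) c t =
            (∑ j ∈ Finset.range U,
              coef (U + 1) (j + 1) * iteratedDeriv (j + 1) (G (k - (U + 1) + (j + 1)) c) t)
            + coef (U + 1) 0 * iteratedDeriv 0 (G (k - (U + 1) + 0) c) t := by
          rw [hSdef]
          exact Finset.sum_range_succ' _ U
        rw [hsplit, mul_add, Finset.mul_sum]
        -- key factorial identity
        have hfacn : (k - U) * (k - U - 1).factorial = (k - U).factorial :=
          Nat.mul_factorial_pred (by omega)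
        have hfacKU : ((k - U).factorial : ℝ) =
            ((k : ℝ) - (U : ℝ)) * ((k - U - 1).factorial : ℝ) := by
          rw [← hfacn]
          push_cast [Nat.cast_sub (show U ≤ k by omega)]
          ring
        -- term-by-term identities
        have hterm : ∀ j ∈ Finset.range U,
            ((k : ℝ) - (U : ℝ)) * (coef (U + 1) (j + 1) *
              iteratedDeriv (j + 1) (G (k - (U + 1) + (j + 1)) c) t) =
            -(coef U j * iteratedDeriv (j + 1) (G (k - U + j) c) t) := by
          intro j _
          have hidx : k - (U + 1) + (j + 1) = k - U + j := by omega
          rw [hidx]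
          have hcoefeq : ((k : ℝ) - (U : ℝ)) * coef (U + 1) (j + 1) = -coef U j := by
            rw [hcoef]
            simp only
            rw [show k - (U + 1) = k - U - 1 from by omega,
                show k - U - 1 + (j + 1) + 1 = k - U + j + 1 from by omega]
            rw [hfacKU, pow_succ]
            ring
          calc ((k : ℝ) - (U : ℝ)) * (coef (U + 1) (j + 1) *
                iteratedDeriv (j + 1) (G (k - U + j) c) t)
              = (((k : ℝ) - (U : ℝ)) * coef (U + 1) (j + 1)) *
                iteratedDeriv (j + 1) (G (k - U + j) c) t := by ring
            _ = -(coef U j * iteratedDeriv (j + 1) (G (k - U + j) c) t) := by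
                rw [hcoefeq]; ring
        rw [Finset.sum_congr rfl hterm]
        have hterm0 : ((k : ℝ) - (U : ℝ)) * (coef (U + 1) 0 *
            iteratedDeriv 0 (G (k - (U + 1) + 0) c) t) = G (k - U - 1) c t := by
          have hidx : k - (U + 1) + 0 = k - U - 1 := by omega
          rw [hidx, iteratedDeriv_zero]
          have hco : ((k : ℝ) - (U : ℝ)) * coef (U + 1) 0 = 1 := by
            rw [hcoef]
            simp only [pow_zero, one_mul]
            rw [show k - (U + 1) = k - U - 1 from by omega,
                show k - U - 1 + 0 + 1 = k - U from by omega]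
            rw [hfacKU]
            have h0 : ((k - U - 1).factorial : ℝ) ≠ 0 :=
              Nat.cast_ne_zero.mpr (Nat.factorial_ne_zero _)
            field_simp
          calc ((k : ℝ) - (U : ℝ)) * (coef (U + 1) 0 * G (k - U - 1) c t)
              = (((k : ℝ) - (U : ℝ)) * coef (U + 1) 0) * G (k - U - 1) c t := by ring
            _ = G (k - U - 1) c t := by rw [hco]; ring
        rw [hterm0, Finset.sum_neg_distrib]
        ring
  -- identify Pmom with π k
  have hP : ∀ c s, Pmom c s = π k c s := by
    intro c s
    rw [hPdef c s, key k hk le_rfl c s, hSdef]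
    simp only [hGvel]
    rw [Fin.sum_univ_eq_sum_range
      (fun j => (-1 : ℝ) ^ j * (((j : ℕ) + 1).factorial : ℝ)⁻¹ * iteratedDeriv j (G j c) s) k]
    refine Finset.sum_congr rfl fun j _ => ?_
    rw [hcoef]
    simp only [Nat.sub_self, Nat.factorial_zero, Nat.cast_one, zero_add]
    ring
  -- conclusion
  have hPfun : Pmom a = π k a := funext (hP a)
  rw [hPfun, hc t a]
  simp only [hP]
  ring
end

section
/- Let m, n be natural numbers, C^c_{ba} ∈ ℝ (b, c, a ∈ Fin n) constants, and L : ℝ^m × ℝ^m × ℝ^n × ℝ^m × ℝ^n → ℝ smooth, with arguments written L(x, v, y, w, z). Let x, v, w : ℝ → ℝ^m and y, z : ℝ → ℝ^n and π¹_A, π²_A : ℝ → ℝ (A ∈ Fin m), π¹_a, π²_a : ℝ → ℝ (a ∈ Fin n) be smooth and satisfy for all t, writing γ(t) = (x(t), v(t), y(t), w(t), z(t)): x' = v; v' = 2w; y' = 2z; π¹_A = ½(∂L/∂w^A)∘γ; π¹_a = ½(∂L/∂z^a)∘γ; (π¹_A)' = (∂L/∂v^A)∘γ − π²_A; (π¹_a)'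 = (∂L/∂y^a)∘γ − π²_a; (π²_A)' = (∂L/∂x^A)∘γ; (π²_a)' = ∑_{b,c} y^c C^b_{ca} π²_b. Then the second order Hamel equations hold: for all t, (I) (∂L/∂x^A)(γ(t)) − (d/dt)[(∂L/∂v^A)∘γ](t) + ½(d²/dt²)[(∂L/∂w^A)∘γ](t) = 0 for every A, and (II) (d/dt)[(∂L/∂y^a)∘γ − ½(d/dt)((∂L/∂z^a)∘γ)](t) = ∑_{b,c} y^c(t) C^b_{ca} · [(∂L/∂y^b)(γ(t)) − ½(d/dt)((∂L/∂z^b)∘γ)(t)] for every a. -/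
/-- The configuration-phase space of a second order system on a trivialised
Atiyah algebroid: coordinates `(x, v, y, w, z)`. -/
abbrev Atiyah2Space (m n : ℕ) :=
  (Fin m → ℝ) × (Fin m → ℝ) × (Fin n → ℝ) × (Fin m → ℝ) × (Fin n → ℝ)

/-- `∂L/∂x^A`. -/
noncomputable def pLx {m n : ℕ} (L : Atiyah2Space m n → ℝ) (A : Fin m)
    (p : Atiyah2Space m n) : ℝ :=
  fderiv ℝ L p (Pi.single A 1, 0, 0, 0, 0)

/-- `∂L/∂v^A`. -/
noncomputable def pLv {m n : ℕ} (L : Atiyah2Space m n → ℝ) (A : Fin m)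
    (p : Atiyah2Space m n) : ℝ :=
  fderiv ℝ L p (0, Pi.single A 1, 0, 0, 0)

/-- `∂L/∂y^a`. -/
noncomputable def pLy {m n : ℕ} (L : Atiyah2Space m n → ℝ) (a : Fin n)
    (p : Atiyah2Space m n) : ℝ :=
  fderiv ℝ L p (0, 0, Pi.single a 1, 0, 0)

/-- `∂L/∂w^A`. -/
noncomputable def pLw {m n : ℕ} (L : Atiyah2Space m n → ℝ) (A : Fin m)
    (p : Atiyah2Space m n) : ℝ :=
  fderiv ℝ L p (0, 0, 0, Pi.single A 1, 0)

/-- `∂L/∂z^a`. -/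
noncomputable def pLz {m n : ℕ} (L : Atiyah2Space m n → ℝ) (a : Fin n)
    (p : Atiyah2Space m n) : ℝ :=
  fderiv ℝ L p (0, 0, 0, 0, Pi.single a 1)

/-- **The second order Hamel equations** from the phase dynamics of a second
order Lagrangian on the Atiyah algebroid `T²P/G` (trivial connection).
`C b c a` denotes the structure constant `C^b_{ca}` of the Lie algebra. -/
theorem second_order_hamel_equations
    (m n : ℕ) (C : Fin n → Fin n → Fin n → ℝ)
    (L : Atiyah2Space m n → ℝ) (hL : ContDiff ℝ (⊤ : ℕ∞) L)
    (x v w : ℝ → Fin m → ℝ) (y z : ℝ → Fin n → ℝ)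
    (hx : ContDiff ℝ (⊤ : ℕ∞) x) (hv : ContDiff ℝ (⊤ : ℕ∞) v) (hw : ContDiff ℝ (⊤ : ℕ∞) w)
    (hy : ContDiff ℝ (⊤ : ℕ∞) y) (hz : ContDiff ℝ (⊤ : ℕ∞) z)
    (π1A π2A : Fin m → ℝ → ℝ) (π1a π2a : Fin n → ℝ → ℝ)
    (hπ1A : ∀ A, ContDiff ℝ (⊤ : ℕ∞) (π1A A)) (hπ2A : ∀ A, ContDiff ℝ (⊤ : ℕ∞) (π2A A))
    (hπ1a : ∀ a, ContDiff ℝ (⊤ : ℕ∞) (π1a a)) (hπ2a : ∀ a, ContDiff ℝ (⊤ : ℕ∞) (π2a a))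
    (γ : ℝ → Atiyah2Space m n)
    (hγ : ∀ t, γ t = (x t, v t, y t, w t, z t))
    -- admissibility
    (hxv : ∀ t, deriv x t = v t)
    (hvw : ∀ t, deriv v t = (2 : ℝ) • w t)
    (hyz : ∀ t, deriv y t = (2 : ℝ) • z t)
    -- momentum equations
    (h1A : ∀ A t, π1A A t = (1 / 2) * pLw L A (γ t))
    (h1a : ∀ a t, π1a a t = (1 / 2) * pLz L a (γ t))
    (hd1A : ∀ A t, deriv (π1A A) t = pLv L A (γ t) - π2A A t)
    (hd1a : ∀ a t, deriv (π1a a) t = pLy L a (γ t) - π2a a t)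
    (hd2A : ∀ A t, deriv (π2A A) t = pLx L A (γ t))
    (hd2a : ∀ a t, deriv (π2a a) t = ∑ b : Fin n, ∑ c : Fin n,
      y t c * C b c a * π2a b t) :
    -- (I)
    (∀ A : Fin m, ∀ t : ℝ,
      pLx L A (γ t) - deriv (fun s => pLv L A (γ s)) t
        + (1 / 2) * deriv (deriv (fun s => pLw L A (γ s))) t = 0) ∧
    -- (II)
    (∀ a : Fin n, ∀ t : ℝ,
      deriv (fun s => pLy L a (γ s)
          - (1 / 2) * deriv (fun r => pLz L a (γ r)) s) t
        = ∑ b : Fin n, ∑ c : Fin n, y t c * C b c a *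
            (pLy L b (γ t) - (1 / 2) * deriv (fun r => pLz L b (γ r)) t)) := by
  have hγc : ContDiff ℝ (⊤ : ℕ∞) γ := by
    have : γ = fun t => (x t, v t, y t, w t, z t) := funext hγ
    rw [this]; exact hx.prodMk (hv.prodMk (hy.prodMk (hw.prodMk hz)))
  have hfd : ∀ vec : Atiyah2Space m n,
      ContDiff ℝ (⊤ : ℕ∞) (fun s : ℝ => fderiv ℝ L (γ s) vec) := fun vec =>
    ((hL.fderiv_right (le_refl _)).clm_apply contDiff_const).comp hγc
  constructor
  · intro A t
    have hgw : ContDiff ℝ (⊤ : ℕ∞) (fun s => pLw L A (γ s)) := hfd _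
    have hgv : ContDiff ℝ (⊤ : ℕ∞) (fun s => pLv L A (γ s)) := hfd _
    have hdw : ContDiff ℝ ((⊤:ℕ∞):WithTop ℕ∞) (deriv (fun s => pLw L A (γ s))) :=
      (contDiff_infty_iff_deriv.mp (hgw.of_le (by simp))).2
    have e1 : ∀ s, deriv (π1A A) s
        = (1 / 2) * deriv (fun r => pLw L A (γ r)) s := by
      intro s
      have : π1A A = fun r => (1 / 2) * pLw L A (γ r) := funext (h1A A)
      rw [this, deriv_const_mul_field]
    have e2 : π2A A = fun s => pLv L A (γ s)
        - (1 / 2) * deriv (fun r => pLw L A (γ r)) s := by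
      funext s
      have h := hd1A A s
      rw [e1 s] at h
      linarith
    have key : pLx L A (γ t)
        = deriv (fun s => pLv L A (γ s)) t
          - (1 / 2) * deriv (deriv (fun r => pLw L A (γ r))) t := by
      rw [← hd2A A t, e2]
      rw [deriv_fun_sub (hgv.differentiable (by simp) t)
        (((hdw.differentiable (by simp) t).const_mul _)),
        deriv_const_mul_field]
    linarith
  · intro a t
    have e1 : ∀ (b : Fin n) (s : ℝ), deriv (π1a b) s
        = (1 / 2) * deriv (fun r => pLz L b (γ r)) s := by
      intro b s
      have : π1a b = fun r => (1 / 2) * pLz L b (γ r) := funext (h1a b)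
      rw [this, deriv_const_mul_field]
    have e2 : ∀ (b : Fin n) (s : ℝ),
        pLy L b (γ s) - (1 / 2) * deriv (fun r => pLz L b (γ r)) s
          = π2a b s := by
      intro b s
      have h := hd1a b s
      rw [e1 b s] at h
      linarith
    have e3 : (fun s => pLy L a (γ s)
        - (1 / 2) * deriv (fun r => pLz L a (γ r)) s) = π2a a :=
      funext fun s => e2 a s
    rw [e3, hd2a a t]
    exact Finset.sum_congr rfl fun b _ => Finset.sum_congr rfl fun c _ => by
      rw [e2 b t]
end

section
/- In the setting of the connection-deformed second order phase dynamics on a trivialised Atiyah algebroid with abelian structure Lie algebra (i.e., all structure constants C^c_{ab} = 0): let 𝔸 : ℝ^m → (Fin m → Fin n → ℝ) be smooth, L : ℝ^m × ℝ^m × ℝ^n × ℝ^m × ℝ^n → ℝ smooth with arguments L(x, v, y, w, z), and suppose smooth curves x, v, w : ℝ → ℝ^m, y, z : ℝ → ℝ^n and momenta π¹_A, π²_A, π¹_a, π²_a : ℝ → ℝ satisfy for all t, with γ(t) = (x(t), v(t), y(t), w(t), z(t)): x' = v; v' = 2w; y' = 2z; π¹_A = ½(∂L/∂w^A)∘γ;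 π¹_a = ½(∂L/∂z^a)∘γ; (π¹_A)' = (∂L/∂v^A)∘γ − π²_A; (π¹_a)' = (∂L/∂y^a)∘γ − π²_a; (π²_A)' = (∂L/∂x^A)∘γ + ∑_{a,B} v^B F^a_{BA}(x) π²_a; (π²_a)' = 0, where F^a_{AB}(x) := ∂𝔸^a_B/∂x^A (x) − ∂𝔸^a_A/∂x^B (x). Then for each a the function t ↦ (∂L/∂y^a)(γ(t)) − ½(d/dt)[(∂L/∂z^a)∘γ](t) is constant on ℝ. -/
/-- **Conserved momentum in the abelian case**: for the connection-deformed
second order phase dynamics on a trivialised Atiyah algebroid with abelian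
structure Lie algebra (all structure constants zero), the momentum
`π²_a = ∂L/∂y^a − ½ (d/dt)(∂L/∂z^a)` is a constant of motion. Here `𝔸 x A a`
is the connection component `𝔸^a_A(x)` and `F a A B x` the (abelian)
curvature component `F^a_{AB}(x)`. -/
theorem abelian_lagrange_poincare_conserved_momentum
    (m n : ℕ)
    (𝔸 : (Fin m → ℝ) → Fin m → Fin n → ℝ) (h𝔸 : ContDiff ℝ (⊤ : ℕ∞) 𝔸)
    (F : Fin n → Fin m → Fin m → (Fin m → ℝ) → ℝ)
    (hF : ∀ a A B ξ, F a A B ξ =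
      fderiv ℝ (fun ξ' => 𝔸 ξ' B a) ξ (Pi.single A 1)
        - fderiv ℝ (fun ξ' => 𝔸 ξ' A a) ξ (Pi.single B 1))
    (L : Atiyah2Space m n → ℝ) (hL : ContDiff ℝ (⊤ : ℕ∞) L)
    (x v w : ℝ → Fin m → ℝ) (y z : ℝ → Fin n → ℝ)
    (hx : ContDiff ℝ (⊤ : ℕ∞) x) (hv : ContDiff ℝ (⊤ : ℕ∞) v) (hw : ContDiff ℝ (⊤ : ℕ∞) w)
    (hy : ContDiff ℝ (⊤ : ℕ∞) y) (hz : ContDiff ℝ (⊤ : ℕ∞) z)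
    (π1A π2A : Fin m → ℝ → ℝ) (π1a π2a : Fin n → ℝ → ℝ)
    (hπ1A : ∀ A, ContDiff ℝ (⊤ : ℕ∞) (π1A A)) (hπ2A : ∀ A, ContDiff ℝ (⊤ : ℕ∞) (π2A A))
    (hπ1a : ∀ a, ContDiff ℝ (⊤ : ℕ∞) (π1a a)) (hπ2a : ∀ a, ContDiff ℝ (⊤ : ℕ∞) (π2a a))
    (γ : ℝ → Atiyah2Space m n)
    (hγ : ∀ t, γ t = (x t, v t, y t, w t, z t))
    (hxv : ∀ t, deriv x t = v t)
    (hvw : ∀ t, deriv v t = (2 : ℝ) • w t)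
    (hyz : ∀ t, deriv y t = (2 : ℝ) • z t)
    (h1A : ∀ A t, π1A A t = (1 / 2) * pLw L A (γ t))
    (h1a : ∀ a t, π1a a t = (1 / 2) * pLz L a (γ t))
    (hd1A : ∀ A t, deriv (π1A A) t = pLv L A (γ t) - π2A A t)
    (hd1a : ∀ a t, deriv (π1a a) t = pLy L a (γ t) - π2a a t)
    (hd2A : ∀ A t, deriv (π2A A) t = pLx L A (γ t)
      + ∑ a : Fin n, ∑ B : Fin m, v t B * F a B A (x t) * π2a a t)
    (hd2a : ∀ a t, deriv (π2a a) t = 0) :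
    ∀ a : Fin n, ∀ t s : ℝ,
      pLy L a (γ t) - (1 / 2) * deriv (fun r => pLz L a (γ r)) t
        = pLy L a (γ s) - (1 / 2) * deriv (fun r => pLz L a (γ r)) s := by
  intro a t s
  have key : ∀ r : ℝ, pLy L a (γ r) - (1 / 2) * deriv (fun u => pLz L a (γ u)) r
      = π2a a r := by
    intro r
    have hfun : (fun u => pLz L a (γ u)) = fun u => 2 * π1a a u := by
      funext u
      have := h1a a u
      linarith
    have hderiv : deriv (fun u => pLz L a (γ u)) r = 2 * deriv (π1a a) r := by
      rw [hfun, deriv_const_mul _ ((hπ1a a).differentiable (by simp) r)]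
    rw [hderiv, hd1a a r]
    ring
  rw [key t, key s]
  exact is_const_of_deriv_eq_zero ((hπ2a a).differentiable (by simp)) (hd2a a) t s
end

section
/- In the setting of the connection-deformed second order phase dynamics on a trivialised Atiyah algebroid with abelian structure Lie algebra: let 𝔸 : ℝ^m → (Fin m → Fin n → ℝ) be smooth, F^a_{AB}(x) := ∂𝔸^a_B/∂x^A (x) − ∂𝔸^a_A/∂x^B (x), L : ℝ^m × ℝ^m × ℝ^n × ℝ^m × ℝ^n → ℝ smooth with arguments L(x, v, y, w, z), and suppose smooth curves x, v, w : ℝ → ℝ^m, y, z : ℝ → ℝ^n and momenta π¹_A, π²_A, π¹_a, π²_a : ℝ → ℝ satisfy for all t, with γ(t) = (x(t), v(t), y(t), w(t), z(t)): x' = v; v' = 2w; y' = 2z; π¹_A = ½(∂L/∂w^A)∘γ; π¹_a = ½(∂L/∂z^a)∘γ; (π¹_A)' = (∂L/∂v^A)∘γ − π²_A; (π¹_a)' = (∂L/∂y^a)∘γ − π²_a; (π²_A)' = (∂L/∂x^A)∘γ + ∑_{a,B} v^B F^a_{BA}(x) π²_a; (π²_a)' = 0. Then for every A and t the generalized Lorentz-force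 equation holds: (d/dt)[(∂L/∂v^A)∘γ − ½(d/dt)((∂L/∂w^A)∘γ)](t) = (∂L/∂x^A)(γ(t)) + ∑_{a,B} v^B(t) F^a_{BA}(x(t)) · [ (∂L/∂y^a)(γ(t)) − ½(d/dt)((∂L/∂z^a)∘γ)(t) ]. -/
/-- **Generalized Lorentz-force equation**: the abelian specialisation of the
second order Lagrange–Poincaré equations derived from the connection-deformed
phase dynamics on a trivialised Atiyah algebroid. Here `𝔸 x A a` is the
connection component `𝔸^a_A(x)` and `F a A B x` the (abelian) curvature
component `F^a_{AB}(x)`. -/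
theorem abelian_second_order_lorentz_force
    (m n : ℕ)
    (𝔸 : (Fin m → ℝ) → Fin m → Fin n → ℝ) (h𝔸 : ContDiff ℝ (⊤ : ℕ∞) 𝔸)
    (F : Fin n → Fin m → Fin m → (Fin m → ℝ) → ℝ)
    (hF : ∀ a A B ξ, F a A B ξ =
      fderiv ℝ (fun ξ' => 𝔸 ξ' B a) ξ (Pi.single A 1)
        - fderiv ℝ (fun ξ' => 𝔸 ξ' A a) ξ (Pi.single B 1))
    (L : Atiyah2Space m n → ℝ) (hL : ContDiff ℝ (⊤ : ℕ∞) L)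
    (x v w : ℝ → Fin m → ℝ) (y z : ℝ → Fin n → ℝ)
    (hx : ContDiff ℝ (⊤ : ℕ∞) x) (hv : ContDiff ℝ (⊤ : ℕ∞) v) (hw : ContDiff ℝ (⊤ : ℕ∞) w)
    (hy : ContDiff ℝ (⊤ : ℕ∞) y) (hz : ContDiff ℝ (⊤ : ℕ∞) z)
    (π1A π2A : Fin m → ℝ → ℝ) (π1a π2a : Fin n → ℝ → ℝ)
    (hπ1A : ∀ A, ContDiff ℝ (⊤ : ℕ∞) (π1A A)) (hπ2A : ∀ A, ContDiff ℝ (⊤ : ℕ∞) (π2A A))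
    (hπ1a : ∀ a, ContDiff ℝ (⊤ : ℕ∞) (π1a a)) (hπ2a : ∀ a, ContDiff ℝ (⊤ : ℕ∞) (π2a a))
    (γ : ℝ → Atiyah2Space m n)
    (hγ : ∀ t, γ t = (x t, v t, y t, w t, z t))
    (hxv : ∀ t, deriv x t = v t)
    (hvw : ∀ t, deriv v t = (2 : ℝ) • w t)
    (hyz : ∀ t, deriv y t = (2 : ℝ) • z t)
    (h1A : ∀ A t, π1A A t = (1 / 2) * pLw L A (γ t))
    (h1a : ∀ a t, π1a a t = (1 / 2) * pLz L a (γ t))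
    (hd1A : ∀ A t, deriv (π1A A) t = pLv L A (γ t) - π2A A t)
    (hd1a : ∀ a t, deriv (π1a a) t = pLy L a (γ t) - π2a a t)
    (hd2A : ∀ A t, deriv (π2A A) t = pLx L A (γ t)
      + ∑ a : Fin n, ∑ B : Fin m, v t B * F a B A (x t) * π2a a t)
    (hd2a : ∀ a t, deriv (π2a a) t = 0) :
    ∀ A : Fin m, ∀ t : ℝ,
      deriv (fun s => pLv L A (γ s)
          - (1 / 2) * deriv (fun r => pLw L A (γ r)) s) t
        = pLx L A (γ t)
          + ∑ a : Fin n, ∑ B : Fin m, v t B * F a B A (x t) *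
              (pLy L a (γ t) - (1 / 2) * deriv (fun r => pLz L a (γ r)) t) := by
  intro A t
  have hw1 : (fun r => pLw L A (γ r)) = fun r => 2 * π1A A r := by
    funext r; have := h1A A r; linarith
  have hz1 : ∀ a : Fin n, (fun r => pLz L a (γ r)) = fun r => 2 * π1a a r := by
    intro a; funext r; have := h1a a r; linarith
  have hdw : ∀ s, deriv (fun r => pLw L A (γ r)) s = 2 * deriv (π1A A) s := by
    intro s
    rw [hw1, deriv_const_mul _ (((hπ1A A).differentiable (by simp)) s)]
  have hdz : ∀ (a : Fin n) s,
      deriv (fun r => pLz L a (γ r)) s = 2 * deriv (π1a a) s := by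
    intro a s
    rw [hz1, deriv_const_mul _ (((hπ1a a).differentiable (by simp)) s)]
  have hfun : (fun s => pLv L A (γ s)
      - (1 / 2) * deriv (fun r => pLw L A (γ r)) s) = π2A A := by
    funext s; rw [hdw s]; have := hd1A A s; linarith
  rw [hfun, hd2A A t]
  congr 1
  refine Finset.sum_congr rfl fun a _ => Finset.sum_congr rfl fun B _ => ?_
  rw [hdz a t]
  have h : π2a a t = pLy L a (γ t) - deriv (π1a a) t := by
    have := hd1a a t; linarith
  rw [h]; ring
end
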